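/- arXiv:math/0611461 — 4 statements merged into one kernel-verified Lean document; each statement's English description precedes it below -/
import Mathlib

section
/- Fix E ∈ ℂ with E ≠ 0. There exists R > 0 such that for all real r ≥ R, the polynomial Q(σ) = σ²(2 − σ/r)(2 + σ) + 2|E|²/r has no real roots σ in the interval [−1, 1]; equivalently, Q(σ) > 0 for all σ ∈ [−1,1]. Consequently the dispersion polynomial P has no real roots τ with |τ/r − 1| ≤ 1 when ζ = −r − r² and |ξ| = r. -/
/-!
Substituting `τ = r (1 + σ)` turns the dispersion polynomial into `−r⁵ Q(σ)`. For
`−2 ≤ σ ≤ 2r` the three factors `σ²`, `2 − σ/r`, `2 + σ` of `Q` are nonnegative, while its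
constant term `2|E|²/r` is strictly positive, so `Q > 0` there and `P ≠ 0`.
-/

lemma dispersion_eq_neg_pow_mul (r c σ : ℝ) (hr : r ≠ 0) :
    (r ^ 2 - (r * (1 + σ)) ^ 2) * (r ^ 4 - (r * (1 + σ) + (-r - r ^ 2)) ^ 2) - c * r ^ 4 =
      -r ^ 5 * (σ ^ 2 * (2 - σ / r) * (2 + σ) + c / r) := by
  field_simp
  ring

lemma quartic_add_div_pos {r c σ : ℝ} (hr : 0 < r) (hc : 0 < c) (hσ₁ : -2 ≤ σ)
    (hσ₂ : σ ≤ 2 * r) : 0 < σ ^ 2 * (2 - σ / r) * (2 + σ) + c / r := by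
  have hσr : σ / r ≤ 2 := (div_le_iff₀ hr).mpr (by linarith)
  have hprod : 0 ≤ σ ^ 2 * (2 - σ / r) * (2 + σ) := by
    apply mul_nonneg (mul_nonneg (sq_nonneg σ) _) <;> linarith
  have := div_pos hc hr
  linarith

/-- for `r` large, `Q(σ) = σ²(2 − σ/r)(2 + σ) + 2|E|²/r > 0` on
`[−1,1]`; consequently the dispersion polynomial has no real roots `τ` with
`|τ/r − 1| ≤ 1` when `ζ = −r − r²`, `|ξ| = r`. -/
theorem stmt3 (E : ℂ) (hE : E ≠ 0) :
    ∃ R > (0 : ℝ), ∀ r : ℝ, R ≤ r →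
      (∀ σ ∈ Set.Icc (-1 : ℝ) 1,
        σ ^ 2 * (2 - σ / r) * (2 + σ) + 2 * ‖E‖ ^ 2 / r > 0) ∧
      (∀ τ : ℝ, |τ / r - 1| ≤ 1 →
        (r ^ 2 - τ ^ 2) * (r ^ 4 - (τ + (-r - r ^ 2)) ^ 2) -
          2 * ‖E‖ ^ 2 * r ^ 4 ≠ 0) := by
  refine ⟨1, one_pos, fun r hr => ?_⟩
  have hr0 : 0 < r := one_pos.trans_le hr
  have hc : 0 < 2 * ‖E‖ ^ 2 := by have := norm_pos_iff.mpr hE; positivity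
  have hQ : ∀ σ ∈ Set.Icc (-1 : ℝ) 1,
      σ ^ 2 * (2 - σ / r) * (2 + σ) + 2 * ‖E‖ ^ 2 / r > 0 := fun σ ⟨h₁, h₂⟩ =>
    quartic_add_div_pos hr0 hc (by linarith) (by linarith)
  refine ⟨hQ, fun τ hτ => ?_⟩
  have hτ_eq : τ = r * (1 + (τ / r - 1)) := by field_simp; ring
  rw [hτ_eq, dispersion_eq_neg_pow_mul r _ _ hr0.ne']
  exact mul_ne_zero (by simp [hr0.ne']) (hQ _ (abs_le.mp hτ)).ne'
end

section
/- Fix E ∈ ℂ with E ≠ 0. For r sufficiently large, the equation σ²(2 − σ/r)(2 + σ) + 2|E|²/r = 0 has a pair of complex conjugate solutions σ(r) satisfying σ(r) = ± i |E|/√(2r) + O(1/r); equivalently, the dispersion polynomial has two complex conjugate roots τ = r ± i (|E|/√2) √r + O(1) when ζ = −r − r² and |ξ| = r. -/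
/-!
Multiplying the rescaled equation by `r` and writing `2|E|² = 4rβ²` with `β = |E|/√(2r)` gives
the monic quartic `q(σ) = σ⁴ - 2(r-1)σ³ - 4r(σ² + β²)`, whose coefficients are real. At `σ = iβ`
the two large terms cancel, so `|q(iβ)| ≤ β⁴ + 2rβ³` is small; as `|q(iβ)|` is the product of the
distances from `iβ` to the four roots, some root `x` lies within `1/4` of `iβ`. For such a small
root the equation reads `4r(x² + β²) = x³(x - 2(r-1))`, so `|x - iβ| |x + iβ| ≤ |x|³ = O(β³)`
while the two factors add up to at least `2β`. Hence `x` or `x̄` is within `8β² = 4|E|²/r`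
of `iβ`.
-/

open Polynomial Complex ComplexConjugate Filter Topology

theorem Polynomial.Monic.exists_isRoot_nnnorm_sub_pow_natDegree_le {K : Type*} [NormedField K]
    [IsAlgClosed K] {p : K[X]} (hp : p.Monic) (hdeg : p.natDegree ≠ 0) (s : K) :
    ∃ x, p.IsRoot x ∧ ‖s - x‖₊ ^ p.natDegree ≤ ‖p.eval s‖₊ := by
  classical
  have hcard : p.roots.card = p.natDegree := IsAlgClosed.card_roots_eq_natDegree
  have hne : p.roots.toFinset.Nonempty := by
    rw [Multiset.toFinset_nonempty, ← Multiset.card_pos, hcard]; exact Nat.pos_of_ne_zero hdeg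
  obtain ⟨x, hx, hmin⟩ := p.roots.toFinset.exists_min_image (fun a => ‖s - a‖₊) hne
  have heval : ‖p.eval s‖₊ = (p.roots.map fun a => ‖s - a‖₊).prod := by
    rw [(IsAlgClosed.splits p).eval_eq_prod_roots_of_monic hp]
    exact (map_multiset_prod (nnnormHom (α := K)).toMonoidHom _).trans
      (congrArg _ (Multiset.map_map _ _ _))
  refine ⟨x, isRoot_of_mem_roots (Multiset.mem_toFinset.mp hx), ?_⟩
  rw [heval, ← hcard, ← Multiset.card_map (fun a => ‖s - a‖₊)]
  refine Multiset.pow_card_le_prod fun y hy => ?_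
  obtain ⟨a, ha, rfl⟩ := Multiset.mem_map.mp hy
  exact hmin a (Multiset.mem_toFinset.mpr ha)

theorem Complex.norm_sub_I_mul_le_or_norm_add_I_mul_le {x : ℂ} {β : ℝ} (hβ : 0 < β)
    (hx : ‖x‖ ≤ 1 / 2) (h : ‖x ^ 2 + β ^ 2‖ ≤ ‖x‖ ^ 3) :
    ‖x - I * β‖ ≤ 8 * β ^ 2 ∨ ‖x + I * β‖ ≤ 8 * β ^ 2 := by
  have hprod : ‖x - I * β‖ * ‖x + I * β‖ = ‖x ^ 2 + β ^ 2‖ := by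
    rw [← norm_mul]; congr 1; linear_combination (-β ^ 2 : ℂ) * I_sq
  have hsum : 2 * β ≤ ‖x - I * β‖ + ‖x + I * β‖ := by
    calc 2 * β = ‖(x + I * β) - (x - I * β)‖ := by
          rw [show (x + I * β) - (x - I * β) = ((2 * β : ℝ) : ℂ) * I by push_cast; ring,
            norm_mul, norm_real, norm_I, Real.norm_of_nonneg (by positivity), mul_one]
      _ ≤ ‖x + I * β‖ + ‖x - I * β‖ := norm_sub_le _ _
      _ = _ := add_comm _ _
  have hx_sq : ‖x‖ ^ 2 ≤ ‖x ^ 2 + β ^ 2‖ + β ^ 2 := by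
    calc ‖x‖ ^ 2 = ‖(x ^ 2 + β ^ 2) - ((β ^ 2 : ℝ) : ℂ)‖ := by
          push_cast; rw [add_sub_cancel_right, norm_pow]
      _ ≤ ‖x ^ 2 + β ^ 2‖ + β ^ 2 := by
          grw [norm_sub_le, norm_real, Real.norm_of_nonneg (by positivity)]
  have hx_le : ‖x‖ ≤ 2 * β := by nlinarith [norm_nonneg x]
  have hprod_le : ‖x - I * β‖ * ‖x + I * β‖ ≤ 8 * β ^ 3 := by
    calc _ = ‖x ^ 2 + β ^ 2‖ := hprod
      _ ≤ (2 * β) ^ 3 := h.trans (pow_le_pow_left₀ (norm_nonneg x) hx_le 3)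
      _ = 8 * β ^ 3 := by ring
  rcases le_total ‖x - I * β‖ ‖x + I * β‖ with hle | hle
  · left; nlinarith [norm_nonneg (x - I * β)]
  · right; nlinarith [norm_nonneg (x + I * β)]

noncomputable def rescaledQuartic (r β : ℝ) : ℂ[X] :=
  X ^ 4 - C (2 * (r - 1) : ℂ) * X ^ 3 - C (4 * r : ℂ) * (X ^ 2 + C (β ^ 2 : ℂ))

namespace rescaledQuartic

variable {r β : ℝ}

theorem monic : (rescaledQuartic r β).Monic := by
  unfold rescaledQuartic; monicity!

theorem natDegree_eq : (rescaledQuartic r β).natDegree = 4 := by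
  unfold rescaledQuartic; compute_degree!

theorem eval_eq (σ : ℂ) :
    (rescaledQuartic r β).eval σ = σ ^ 4 - 2 * (r - 1) * σ ^ 3 - 4 * r * (σ ^ 2 + β ^ 2) := by
  simp [rescaledQuartic]

theorem isRoot_conj {σ : ℂ} (h : (rescaledQuartic r β).IsRoot σ) :
    (rescaledQuartic r β).IsRoot (conj σ) := by
  simpa [IsRoot, eval_eq, map_ofNat] using congrArg conj h.eq_zero

theorem norm_sq_add_sq_le_norm_pow_three {x : ℂ} (hx : (rescaledQuartic r β).IsRoot x)
    (hr : 2 ≤ r) (hx_le : ‖x‖ ≤ 1 / 2) : ‖x ^ 2 + β ^ 2‖ ≤ ‖x‖ ^ 3 := by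
  have hroot : ((4 * r : ℝ) : ℂ) * (x ^ 2 + β ^ 2) = x ^ 3 * (x - (2 * (r - 1) : ℝ)) := by
    push_cast
    linear_combination -(eval_eq (r := r) (β := β) x).symm.trans hx.eq_zero
  have hfactor : ‖x - (2 * (r - 1) : ℝ)‖ ≤ 4 * r := by
    calc ‖x - (2 * (r - 1) : ℝ)‖ ≤ ‖x‖ + ‖((2 * (r - 1) : ℝ) : ℂ)‖ := norm_sub_le _ _
      _ ≤ 4 * r := by rw [norm_real, Real.norm_of_nonneg (by linarith)]; linarith
  have h := congrArg norm hroot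
  rw [norm_mul, norm_mul, norm_pow, norm_real, Real.norm_of_nonneg (by linarith)] at h
  have : 4 * r * ‖x ^ 2 + β ^ 2‖ ≤ 4 * r * ‖x‖ ^ 3 := by
    rw [h, mul_comm (4 * r)]; gcongr
  exact le_of_mul_le_mul_left this (by linarith)

theorem exists_isRoot_norm_sub_I_mul_le_quarter (hr : 1 ≤ r) (hβ₀ : 0 ≤ β) (hβ : β ≤ 1 / 8)
    (hrβ : r * β ^ 3 ≤ 1 / 1024) :
    ∃ x, (rescaledQuartic r β).IsRoot x ∧ ‖x - I * β‖ ≤ 1 / 4 := by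
  have heval : (rescaledQuartic r β).eval (I * β) =
      ((β ^ 4 : ℝ) : ℂ) + ((2 * (r - 1) * β ^ 3 : ℝ) : ℂ) * I := by
    rw [eval_eq]; push_cast
    linear_combination (β ^ 4 * (I ^ 2 - 1) - 2 * (r - 1) * β ^ 3 * I - 4 * r * β ^ 2 : ℂ) * I_sq
  have hsmall : ‖(rescaledQuartic r β).eval (I * β)‖ ≤ (1 / 4) ^ 4 := by
    grw [heval, norm_add_le, norm_mul, norm_I, norm_real, norm_real,
      Real.norm_of_nonneg (by positivity), Real.norm_of_nonneg (by positivity)]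
    nlinarith [pow_nonneg hβ₀ 3]
  obtain ⟨x, hx, hnear⟩ :=
    monic.exists_isRoot_nnnorm_sub_pow_natDegree_le (by simp [natDegree_eq]) (I * β)
  refine ⟨x, hx, ?_⟩
  rw [natDegree_eq, ← NNReal.coe_le_coe] at hnear
  push_cast at hnear
  rw [norm_sub_rev]
  exact (pow_le_pow_iff_left₀ (norm_nonneg _) (by norm_num) (by norm_num)).mp (hnear.trans hsmall)

theorem exists_isRoot_norm_sub_I_mul_le (hr : 2 ≤ r) (hβ₀ : 0 < β) (hβ : β ≤ 1 / 8)
    (hrβ : r * β ^ 3 ≤ 1 / 1024) :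
    ∃ σ, (rescaledQuartic r β).IsRoot σ ∧ ‖σ - I * β‖ ≤ 8 * β ^ 2 := by
  obtain ⟨x, hx, hnear⟩ := exists_isRoot_norm_sub_I_mul_le_quarter (by linarith) hβ₀.le hβ hrβ
  have hx_le : ‖x‖ ≤ 1 / 2 := by
    calc ‖x‖ ≤ ‖x - I * β‖ + ‖I * β‖ := norm_le_norm_sub_add _ _
      _ ≤ 1 / 2 := by
        rw [norm_mul, norm_I, norm_real, Real.norm_of_nonneg hβ₀.le]; linarith
  rcases norm_sub_I_mul_le_or_norm_add_I_mul_le hβ₀ hx_le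
      (norm_sq_add_sq_le_norm_pow_three hx hr hx_le) with h | h
  · exact ⟨x, hx, h⟩
  · refine ⟨conj x, isRoot_conj hx, ?_⟩
    rwa [← norm_conj, map_sub, conj_conj, map_mul, conj_I, conj_ofReal, neg_mul, sub_neg_eq_add]

theorem rescaled_eq_of_isRoot {a : ℝ} {σ : ℂ} (hσ : (rescaledQuartic r β).IsRoot σ)
    (hr : r ≠ 0) (ha : a ^ 2 = 2 * r * β ^ 2) :
    σ ^ 2 * (2 - σ / r) * (2 + σ) + 2 * (a : ℂ) ^ 2 / r = 0 := by
  have ha' : (a : ℂ) ^ 2 = 2 * r * β ^ 2 := by exact_mod_cast ha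
  have hr' : (r : ℂ) ≠ 0 := ofReal_ne_zero.mpr hr
  have hσ' := hσ.eq_zero
  rw [eval_eq] at hσ'
  field_simp
  linear_combination -hσ' + 2 * ha'

end rescaledQuartic

/-- for `r` large the rescaled dispersion equation has a pair of
complex conjugate roots `σ(r) = ± i|E|/√(2r) + O(1/r)`; equivalently the
dispersion polynomial has complex conjugate roots
`τ = r ± i (|E|/√2)√r + O(1)`. -/
theorem stmt4 (E : ℂ) (hE : E ≠ 0) :
    ∃ C > (0 : ℝ), ∃ R > (0 : ℝ), ∀ r : ℝ, R ≤ r →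
      ∃ σ : ℂ,
        σ ^ 2 * (2 - σ / (r : ℂ)) * (2 + σ) + 2 * ((‖E‖ : ℝ) : ℂ) ^ 2 / (r : ℂ) = 0 ∧
        (starRingEnd ℂ σ) ^ 2 * (2 - starRingEnd ℂ σ / (r : ℂ)) * (2 + starRingEnd ℂ σ) +
            2 * ((‖E‖ : ℝ) : ℂ) ^ 2 / (r : ℂ) = 0 ∧
        ‖(σ - Complex.I * ((‖E‖ / Real.sqrt (2 * r) : ℝ) : ℂ))‖ ≤ C / r ∧
        ((r : ℂ) ^ 2 - ((r : ℂ) * (1 + σ)) ^ 2) *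
            ((r : ℂ) ^ 4 - ((r : ℂ) * (1 + σ) + (-(r : ℂ) - (r : ℂ) ^ 2)) ^ 2) -
          2 * ((‖E‖ : ℝ) : ℂ) ^ 2 * (r : ℂ) ^ 4 = 0 ∧
        ‖((r : ℂ) * (1 + σ) -
            ((r : ℂ) + Complex.I * ((‖E‖ / Real.sqrt 2 * Real.sqrt r : ℝ) : ℂ)))‖ ≤ C := by
  have ha : 0 < ‖E‖ := norm_pos_iff.mpr hE
  have hβ_lim : Tendsto (fun r : ℝ => ‖E‖ / √(2 * r)) atTop (𝓝 0) :=
    tendsto_const_nhds.div_atTop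
      (Real.tendsto_sqrt_atTop.comp (tendsto_id.const_mul_atTop two_pos))
  obtain ⟨R, hR⟩ := eventually_atTop.mp <| (eventually_ge_atTop 2).and <|
    (hβ_lim.eventually_le_const (u := 1 / 8) (by norm_num)).and
    ((hβ_lim.const_mul (‖E‖ ^ 2 / 2)).eventually_le_const (u := 1 / 1024) (by norm_num))
  refine ⟨4 * ‖E‖ ^ 2, by positivity, max R 1, lt_max_of_lt_right one_pos, fun r hr => ?_⟩
  obtain ⟨hr2, hβ, hrβ⟩ := hR r (le_of_max_le_left hr)
  set β := ‖E‖ / √(2 * r)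
  have hr0 : 0 < r := by linarith
  have hβ₀ : 0 < β := by positivity
  have hβ_sq : ‖E‖ ^ 2 = 2 * r * β ^ 2 := by
    rw [div_pow, Real.sq_sqrt (by positivity)]; field_simp
  have hrβ' : r * β ^ 3 ≤ 1 / 1024 :=
    calc r * β ^ 3 = ‖E‖ ^ 2 / 2 * β := by rw [hβ_sq]; ring
      _ ≤ 1 / 1024 := hrβ
  obtain ⟨σ, hσ, hnear⟩ := rescaledQuartic.exists_isRoot_norm_sub_I_mul_le hr2 hβ₀ hβ hrβ'
  have h8 : 8 * β ^ 2 = 4 * ‖E‖ ^ 2 / r := by rw [hβ_sq]; field_simp; ring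
  have hτ : ‖E‖ / √2 * √r = r * β := by
    have hsqrt : √r ^ 2 = r := Real.sq_sqrt hr0.le
    simp only [β, Real.sqrt_mul zero_le_two]
    field_simp
    rw [hsqrt]
  refine ⟨σ, rescaledQuartic.rescaled_eq_of_isRoot hσ hr0.ne' hβ_sq,
    rescaledQuartic.rescaled_eq_of_isRoot (rescaledQuartic.isRoot_conj hσ) hr0.ne' hβ_sq,
    h8 ▸ hnear, ?_, ?_⟩
  · have := hσ.eq_zero
    rw [rescaledQuartic.eval_eq] at this
    have hE' : ((‖E‖ : ℝ) : ℂ) ^ 2 = 2 * r * β ^ 2 := by exact_mod_cast hβ_sq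
    linear_combination (r : ℂ) ^ 4 * this - 2 * (r : ℂ) ^ 4 * hE'
  · rw [hτ, show (r : ℂ) * (1 + σ) - (r + I * ((r * β : ℝ) : ℂ)) = r * (σ - I * β) by
        push_cast; ring, norm_mul, norm_real, Real.norm_of_nonneg hr0.le]
    calc r * ‖σ - I * β‖ ≤ r * (8 * β ^ 2) := by gcongr
      _ = 4 * ‖E‖ ^ 2 := by rw [h8]; field_simp
end

section
/- Let E ∈ ℂ, E ≠ 0, and for integer k let m = m(k) satisfy k² + k − 1 < m ≤ k² + k. Consider the quartic polynomial p_k(λ) = (λ² − k²)((λ − m)² − k⁴) − 2|E|² k⁴. For k sufficiently large, p_k has exactly four distinct roots: two real roots λ₁, λ₂ with λ₁ ~ 2k² and λ₂ ~ −k as k → ∞, and two non-real complex conjugate roots λ₃, λ₄ = conj(λ₃) with Re λ₃ ~ k and Im λ₃ ~ |E|√(k/2) as k → ∞. -/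
/-!
Removing the perturbation `2|E|²k⁴`, the quartic becomes `(λ² − k²)((λ − m)² − k⁴)`, with
roots `±k` and `m ± k²`. Near `m + k² ≈ 2k²` and near `−k` the sign change survives the
perturbation, so the intermediate value theorem gives real roots `r ≈ 2k²` and `s ≈ −k`.
Dividing them off leaves, by Vieta, a monic quadratic `(λ − a)² + δ` with
`a = m − (r + s)/2 ≈ k`. Evaluating the factorization at `λ = a` gives
`p_k(a) = (a − r)(a − s) δ`, where `p_k(a) = −2|E|²k⁴ + O(k³)` and
`(a − r)(a − s) = −4k³ + O(k²)`; hence `δ = |E|²k/2 + O(1) > 0`, and the remaining roots are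
`a ± i√δ`.
-/

open Filter Topology

-- `p_k(x)` with `c = |E|²`
def zakharovQuartic {R : Type*} [CommRing R] (c k m x : R) : R :=
  (x ^ 2 - k ^ 2) * ((x - m) ^ 2 - k ^ 4) - 2 * c * k ^ 4

section Field

variable {K : Type*} [Field K] [CharZero K]

def pairRe (m r s : K) : K := m - (r + s) / 2

def pairGap (k m r s : K) : K :=
  (3 * r ^ 2 + 2 * r * s + 3 * s ^ 2) / 4 - m * (r + s) - k ^ 4 - k ^ 2

theorem zakharovQuartic_eq_mul_of_roots {c k m r s : K} (hrs : r ≠ s)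
    (hr : zakharovQuartic c k m r = 0) (hs : zakharovQuartic c k m s = 0) (x : K) :
    zakharovQuartic c k m x =
      (x - r) * (x - s) * ((x - pairRe m r s) ^ 2 + pairGap k m r s) := by
  -- the difference of the two sides is linear in `x` and vanishes at `r` and `s`
  refine mul_left_cancel₀ (sub_ne_zero.2 hrs) ?_
  unfold zakharovQuartic pairRe pairGap at *
  linear_combination (x - s) * hr - (x - r) * hs

end Field

theorem zakharovQuartic_ofReal (c k m x : ℝ) :
    zakharovQuartic (c : ℂ) k m x = ((zakharovQuartic c k m x : ℝ) : ℂ) := by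
  push_cast [zakharovQuartic]; rfl

theorem sub_sq_add_sq_eq_mul_sub_conj (x : ℂ) (a t : ℝ) :
    (x - a) ^ 2 + (t : ℂ) ^ 2 = (x - ⟨a, t⟩) * (x - starRingEnd ℂ ⟨a, t⟩) := by
  have : (⟨a, t⟩ : ℂ) = a + t * Complex.I := Complex.ext (by simp) (by simp)
  rw [this, map_add, map_mul, Complex.conj_ofReal, Complex.conj_ofReal, Complex.conj_I]
  linear_combination (t : ℂ) ^ 2 * Complex.I_sq

section RealRoots

theorem continuous_zakharovQuartic (c k m : ℝ) : Continuous (zakharovQuartic c k m) := by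
  unfold zakharovQuartic; fun_prop

theorem zakharovQuartic_add_sq (c k m : ℝ) :
    zakharovQuartic c k m (m + k ^ 2) = -2 * c * k ^ 4 := by
  unfold zakharovQuartic; ring

theorem zakharovQuartic_neg_self (c k m : ℝ) : zakharovQuartic c k m (-k) = -2 * c * k ^ 4 := by
  unfold zakharovQuartic; ring

variable {c k m : ℝ}

theorem exists_zakharovQuartic_root_near_two_sq (hc : 0 < c) (hk : 1 ≤ k) (hck : c ≤ k ^ 2)
    (hm : k ^ 2 + k - 1 < m) :
    ∃ r ∈ Set.Ioo (m + k ^ 2) (m + k ^ 2 + 1), zakharovQuartic c k m r = 0 := by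
  refine intermediate_value_Ioo (by linarith) (continuous_zakharovQuartic c k m).continuousOn
    ⟨?_, ?_⟩
  · rw [zakharovQuartic_add_sq]
    nlinarith [pow_pos (by linarith : (0:ℝ) < k) 4]
  · have hk4 : k ^ 2 ≤ k ^ 4 := pow_le_pow_right₀ hk (by norm_num)
    have h1 : 3 * k ^ 4 ≤ (m + k ^ 2 + 1) ^ 2 - k ^ 2 := by nlinarith
    have h2 : 2 * c * k ^ 4 < 3 * k ^ 4 * (2 * k ^ 2 + 1) := by nlinarith
    have h3 : zakharovQuartic c k m (m + k ^ 2 + 1) =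
        ((m + k ^ 2 + 1) ^ 2 - k ^ 2) * (2 * k ^ 2 + 1) - 2 * c * k ^ 4 := by
      unfold zakharovQuartic; ring
    rw [h3]
    nlinarith [mul_le_mul_of_nonneg_right h1 (by positivity : (0:ℝ) ≤ 2 * k ^ 2 + 1)]

theorem exists_zakharovQuartic_root_near_neg (hc : 0 < c) (hk : 0 < k)
    (hm : k ^ 2 + k - 1 < m) :
    ∃ s ∈ Set.Ioo (-k - c / 4 - 1) (-k), zakharovQuartic c k m s = 0 := by
  refine intermediate_value_Ioo' (by linarith) (continuous_zakharovQuartic c k m).continuousOn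
    ⟨?_, ?_⟩
  · rw [zakharovQuartic_neg_self]
    nlinarith [pow_pos hk 4]
  · -- at `-k - a` the unperturbed product is at least `8 a k⁴`, beating `2 c k⁴` for `a = c/4 + 1`
    have h1 : 2 * k * (c / 4 + 1) ≤ (-k - c / 4 - 1) ^ 2 - k ^ 2 := by nlinarith
    have hkm : k ^ 2 + 2 * k < k + (c / 4 + 1) + m := by linarith
    have h2 : 4 * k ^ 3 ≤ (-k - c / 4 - 1 - m) ^ 2 - k ^ 4 := by
      nlinarith [pow_lt_pow_left₀ hkm (by positivity) two_ne_zero]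
    have h3 := mul_le_mul h1 h2 (by positivity)
      ((by positivity : (0:ℝ) ≤ 2 * k * (c / 4 + 1)).trans h1)
    unfold zakharovQuartic
    nlinarith [pow_pos hk 4]

theorem abs_mul_add_two_mul_le {u M K : ℝ} (hu : |u| ≤ M) (hMK : M ≤ K) :
    |u * (u + 2 * K)| ≤ 3 * M * K := by
  have hu2 : |u + 2 * K| ≤ 3 * K := by
    rw [abs_le] at hu ⊢; constructor <;> linarith
  calc |u * (u + 2 * K)| = |u| * |u + 2 * K| := abs_mul _ _
    _ ≤ M * (3 * K) := mul_le_mul hu hu2 (abs_nonneg _) ((abs_nonneg u).trans hu)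
    _ = 3 * M * K := by ring

theorem abs_zakharovQuartic_add_le {x M : ℝ} (hM : 1 ≤ M) (hMk : M ≤ k) (hx : |x - k| ≤ M)
    (hxm : |x - m + k ^ 2| ≤ M) :
    |zakharovQuartic c k m x + 2 * c * k ^ 4| ≤ 9 * M ^ 2 * k ^ 3 := by
  have h1 := abs_mul_add_two_mul_le hx hMk
  have h2 := abs_mul_add_two_mul_le (u := -(x - m + k ^ 2)) (M := M) (K := k ^ 2)
    (by rwa [abs_neg]) (by nlinarith)
  have hfac : zakharovQuartic c k m x + 2 * c * k ^ 4 =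
      ((x - k) * (x - k + 2 * k)) * (-(x - m + k ^ 2) * (-(x - m + k ^ 2) + 2 * k ^ 2)) := by
    unfold zakharovQuartic; ring
  rw [hfac, abs_mul]
  calc _ ≤ (3 * M * k) * (3 * M * k ^ 2) :=
        mul_le_mul h1 h2 (abs_nonneg _) (by nlinarith)
    _ = 9 * M ^ 2 * k ^ 3 := by ring

theorem abs_mul_add_four_mul_cube_le {x y M : ℝ} (hM : 1 ≤ M) (hMk : M ≤ k)
    (hx : |x + 2 * k ^ 2| ≤ M) (hy : |y - 2 * k| ≤ M) :
    |x * y + 4 * k ^ 3| ≤ 5 * M * k ^ 2 := by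
  have hk : 0 ≤ k := by linarith
  calc |x * y + 4 * k ^ 3|
        = |(x + 2 * k ^ 2) * (y - 2 * k) + 2 * k * (x + 2 * k ^ 2)
            + -(2 * k ^ 2) * (y - 2 * k)| := by ring_nf
    _ ≤ |x + 2 * k ^ 2| * |y - 2 * k| + 2 * k * |x + 2 * k ^ 2| + 2 * k ^ 2 * |y - 2 * k| := by
          refine (abs_add_three _ _ _).trans_eq ?_
          simp only [abs_mul, abs_neg, abs_two, abs_of_nonneg hk, abs_pow]
    _ ≤ M * M + 2 * k * M + 2 * k ^ 2 * M := by gcongr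
    _ ≤ 5 * M * k ^ 2 := by nlinarith

theorem abs_pairGap_sub_le {r s : ℝ} (hc : 0 < c) (hk : 3 * (c + 2) ≤ k)
    (hm₁ : k ^ 2 + k - 1 < m) (hm₂ : m ≤ k ^ 2 + k)
    (hr : r ∈ Set.Ioo (m + k ^ 2) (m + k ^ 2 + 1)) (hs : s ∈ Set.Ioo (-k - c / 4 - 1) (-k))
    (hPr : zakharovQuartic c k m r = 0) (hPs : zakharovQuartic c k m s = 0) :
    |pairGap k m r s - c * k / 2| ≤ 6 * (c + 2) ^ 2 := by
  obtain ⟨hr₁, hr₂⟩ := hr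
  obtain ⟨hs₁, hs₂⟩ := hs
  set a := pairRe m r s with ha
  set δ := pairGap k m r s
  set D := (a - r) * (a - s)
  have hM : (1 : ℝ) ≤ c + 2 := by linarith
  have hMk : c + 2 ≤ k := by linarith
  have hk₀ : 0 < k := by linarith
  have hck : 0 < c * k / 2 := by positivity
  have hN := abs_zakharovQuartic_add_le (c := c) (m := m) (x := a) hM hMk
    (by rw [abs_le, ha, pairRe]; constructor <;> linarith)
    (by rw [abs_le, ha, pairRe]; constructor <;> linarith)
  have hD := abs_mul_add_four_mul_cube_le (x := a - r) (y := a - s) hM hMk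
    (by rw [abs_le, ha, pairRe]; constructor <;> linarith)
    (by rw [abs_le, ha, pairRe]; constructor <;> linarith)
  have hNδ : zakharovQuartic c k m a = D * δ := by
    rw [zakharovQuartic_eq_mul_of_roots (by nlinarith) hPr hPs a]; ring
  have hDk : 2 * k ^ 3 ≤ |D| := by
    rw [abs_le] at hD
    rw [abs_of_neg (by nlinarith)]
    nlinarith
  have hk3 : 0 < k ^ 3 := pow_pos hk₀ 3
  have : |δ - c * k / 2| * (2 * k ^ 3) ≤ 12 * (c + 2) ^ 2 * k ^ 3 := calc
    _ ≤ |δ - c * k / 2| * |D| := by gcongr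
    _ = |(zakharovQuartic c k m a + 2 * c * k ^ 4) - c * k / 2 * (D + 4 * k ^ 3)| := by
        rw [← abs_mul, hNδ]; ring_nf
    _ ≤ |zakharovQuartic c k m a + 2 * c * k ^ 4| + c * k / 2 * |D + 4 * k ^ 3| := by
        refine (abs_sub _ _).trans_eq ?_
        rw [abs_mul, abs_of_pos hck]
    _ ≤ 9 * (c + 2) ^ 2 * k ^ 3 + c * k / 2 * (5 * (c + 2) * k ^ 2) := by gcongr
    _ ≤ 12 * (c + 2) ^ 2 * k ^ 3 := by nlinarith
  nlinarith

structure ZakharovRoots (c k m r s : ℝ) : Prop where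
  root_r : zakharovQuartic c k m r = 0
  root_s : zakharovQuartic c k m s = 0
  s_lt_r : s < r
  abs_r_sub : |r - 2 * k ^ 2| ≤ k + 1
  abs_s_add : |s + k| ≤ c / 4 + 1
  abs_pairRe_sub : |pairRe m r s - k| ≤ c + 2
  abs_pairGap_sub : |pairGap k m r s - c * k / 2| ≤ 6 * (c + 2) ^ 2
  pairGap_pos : 0 < pairGap k m r s

theorem exists_zakharovRoots (hc : 0 < c) (hk : 3 * (c + 2) ≤ k)
    (hck : 12 * (c + 2) ^ 2 < c * k) (hm₁ : k ^ 2 + k - 1 < m) (hm₂ : m ≤ k ^ 2 + k) :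
    ∃ r s : ℝ, ZakharovRoots c k m r s := by
  obtain ⟨r, hr, hPr⟩ :=
    exists_zakharovQuartic_root_near_two_sq hc (by linarith) (by nlinarith) hm₁
  obtain ⟨s, hs, hPs⟩ := exists_zakharovQuartic_root_near_neg hc (by linarith) hm₁
  have hgap := abs_pairGap_sub_le hc hk hm₁ hm₂ hr hs hPr hPs
  obtain ⟨hr₁, hr₂⟩ := hr
  obtain ⟨hs₁, hs₂⟩ := hs
  refine ⟨r, s, hPr, hPs, by nlinarith, ?_, ?_, ?_, hgap, ?_⟩
  · rw [abs_le]; constructor <;> linarith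
  · rw [abs_le]; constructor <;> linarith
  · rw [abs_le, pairRe]; constructor <;> linarith
  · rw [abs_le] at hgap; linarith

end RealRoots

theorem zakharovQuartic_ofReal_eq_zero_iff {c k m r s : ℝ} (hrs : r ≠ s)
    (hr : zakharovQuartic c k m r = 0) (hs : zakharovQuartic c k m s = 0)
    (hgap : 0 ≤ pairGap k m r s) (x : ℂ) :
    zakharovQuartic (c : ℂ) k m x = 0 ↔ x = r ∨ x = s ∨
      x = ⟨pairRe m r s, √(pairGap k m r s)⟩ ∨
      x = starRingEnd ℂ ⟨pairRe m r s, √(pairGap k m r s)⟩ := by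
  have hrC : zakharovQuartic (c : ℂ) k m r = 0 := by
    rw [zakharovQuartic_ofReal, hr, Complex.ofReal_zero]
  have hsC : zakharovQuartic (c : ℂ) k m s = 0 := by
    rw [zakharovQuartic_ofReal, hs, Complex.ofReal_zero]
  have hre : pairRe (m : ℂ) r s = (pairRe m r s : ℝ) := by push_cast [pairRe]; rfl
  have hgapC : pairGap (k : ℂ) m r s = (√(pairGap k m r s) : ℂ) ^ 2 := by
    rw [← Complex.ofReal_pow, Real.sq_sqrt hgap]; push_cast [pairGap]; rfl
  rw [zakharovQuartic_eq_mul_of_roots (Complex.ofReal_injective.ne hrs) hrC hsC, hre, hgapC,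
    sub_sq_add_sq_eq_mul_sub_conj]
  simp only [mul_eq_zero, sub_eq_zero, or_assoc]

theorem pairwise_ne_ofReal_ofReal_conj {r s : ℝ} {z : ℂ} (hrs : r ≠ s) (hz : 0 < z.im) :
    [(r : ℂ), s, z, starRingEnd ℂ z].Pairwise (· ≠ ·) := by
  simp only [List.pairwise_cons, List.mem_cons, forall_eq_or_imp, List.not_mem_nil]
  simp [Complex.ext_iff, hrs, hz.ne, hz.ne', (neg_lt_self hz).ne']

theorem tendsto_div_of_abs_sub_le {u v : ℕ → ℝ} {A : ℝ}
    (h : ∀ᶠ k : ℕ in atTop, v k ≠ 0 ∧ |u k - v k| * k ≤ A * |v k|) :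
    Tendsto (fun k => u k / v k) atTop (𝓝 1) := by
  have hA : Tendsto (fun k : ℕ => A / k) atTop (𝓝 0) := tendsto_const_div_atTop_nhds_zero_nat A
  refine tendsto_sub_nhds_zero_iff.1 (squeeze_zero_norm' ?_ hA)
  filter_upwards [h, eventually_gt_atTop 0] with k ⟨hv, hle⟩ hk
  rw [Real.norm_eq_abs, div_sub_one hv, abs_div, div_le_div_iff₀ (abs_pos.2 hv) (by positivity)]
  exact hle

theorem exists_zakharovRoots_seq {c : ℝ} (hc : 0 < c) {m : ℕ → ℝ}
    (hm : ∀ k : ℕ, (k : ℝ) ^ 2 + k - 1 < m k ∧ m k ≤ (k : ℝ) ^ 2 + k) :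
    ∃ r s : ℕ → ℝ, ∀ᶠ k : ℕ in atTop, ZakharovRoots c k (m k) (r k) (s k) := by
  have hlarge : ∀ᶠ k : ℕ in atTop, 3 * (c + 2) ≤ k ∧ 12 * (c + 2) ^ 2 / c < k :=
    (tendsto_natCast_atTop_atTop.eventually_ge_atTop _).and
      (tendsto_natCast_atTop_atTop.eventually_gt_atTop _)
  obtain ⟨k₀, hk₀⟩ := eventually_atTop.1 hlarge
  have hroots : ∀ k : ℕ, ∃ r s : ℝ, k₀ ≤ k → ZakharovRoots c k (m k) r s := by
    intro k
    by_cases hk : k₀ ≤ k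
    · obtain ⟨hk₁, hk₂⟩ := hk₀ k hk
      obtain ⟨r, s, h⟩ :=
        exists_zakharovRoots hc hk₁ ((div_lt_iff₀' hc).1 hk₂) (hm k).1 (hm k).2
      exact ⟨r, s, fun _ => h⟩
    · exact ⟨0, 0, fun h => absurd h hk⟩
  choose r s h using hroots
  exact ⟨r, s, eventually_atTop.2 ⟨k₀, h⟩⟩

theorem ZakharovRoots.tendsto {c : ℝ} (hc : 0 < c) {m r s : ℕ → ℝ}
    (h : ∀ᶠ k : ℕ in atTop, ZakharovRoots c k (m k) (r k) (s k)) :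
    Tendsto (fun k : ℕ => r k / (2 * (k : ℝ) ^ 2)) atTop (𝓝 1) ∧
      Tendsto (fun k : ℕ => s k / -(k : ℝ)) atTop (𝓝 1) ∧
      Tendsto (fun k : ℕ => pairRe (m k) (r k) (s k) / k) atTop (𝓝 1) ∧
      Tendsto (fun k : ℕ => pairGap (k : ℝ) (m k) (r k) (s k) / (c * k / 2)) atTop (𝓝 1) := by
  have h' : ∀ᶠ k : ℕ in atTop, ZakharovRoots c k (m k) (r k) (s k) ∧ (1 : ℝ) ≤ k :=
    h.and (tendsto_natCast_atTop_atTop.eventually_ge_atTop 1)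
  refine ⟨tendsto_div_of_abs_sub_le (A := 1) ?_, tendsto_div_of_abs_sub_le (A := c / 4 + 1) ?_,
    tendsto_div_of_abs_sub_le (A := c + 2) ?_,
    tendsto_div_of_abs_sub_le (A := 12 * (c + 2) ^ 2 / c) ?_⟩ <;>
  filter_upwards [h'] with k ⟨hk, hk₁⟩
  · have hv : (0 : ℝ) < 2 * k ^ 2 := by positivity
    refine ⟨hv.ne', ?_⟩
    rw [abs_of_pos hv]
    nlinarith [mul_le_mul_of_nonneg_right hk.abs_r_sub (by positivity : (0 : ℝ) ≤ k)]
  · have hv : (0 : ℝ) < k := by linarith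
    refine ⟨neg_ne_zero.2 hv.ne', ?_⟩
    rw [abs_neg, abs_of_pos hv, sub_neg_eq_add]
    nlinarith [mul_le_mul_of_nonneg_right hk.abs_s_add (by positivity : (0 : ℝ) ≤ k)]
  · have hv : (0 : ℝ) < k := by linarith
    refine ⟨hv.ne', ?_⟩
    rw [abs_of_pos hv]
    nlinarith [mul_le_mul_of_nonneg_right hk.abs_pairRe_sub (by positivity : (0 : ℝ) ≤ k)]
  · have hv : 0 < c * k / 2 := by positivity
    refine ⟨hv.ne', ?_⟩
    rw [abs_of_pos hv, show 12 * (c + 2) ^ 2 / c * (c * k / 2) = 6 * (c + 2) ^ 2 * k by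
      field_simp; ring]
    nlinarith [mul_le_mul_of_nonneg_right hk.abs_pairGap_sub (by positivity : (0 : ℝ) ≤ k)]

/-- for `k` large, the quartic
`p_k(λ) = (λ² − k²)((λ − m)² − k⁴) − 2|E|²k⁴` has exactly four distinct roots:
two real ones `λ₁ ~ 2k²`, `λ₂ ~ −k`, and two non-real complex conjugate ones
with `Re λ₃ ~ k`, `Im λ₃ ~ |E|√(k/2)`. -/
theorem stmt5 (E : ℂ) (hE : E ≠ 0) (m : ℕ → ℝ)
    (hm : ∀ k : ℕ, (k : ℝ) ^ 2 + k - 1 < m k ∧ m k ≤ (k : ℝ) ^ 2 + k) :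
    ∃ k₀ : ℕ, ∃ l₁ l₂ l₃ : ℕ → ℂ,
      (∀ k : ℕ, k₀ ≤ k →
        (l₁ k).im = 0 ∧ (l₂ k).im = 0 ∧ (l₃ k).im ≠ 0 ∧
        [l₁ k, l₂ k, l₃ k, starRingEnd ℂ (l₃ k)].Pairwise (· ≠ ·) ∧
        (∀ lam : ℂ,
          (lam ^ 2 - (k : ℂ) ^ 2) * ((lam - ((m k : ℝ) : ℂ)) ^ 2 - (k : ℂ) ^ 4) -
              2 * ((‖E‖ : ℝ) : ℂ) ^ 2 * (k : ℂ) ^ 4 = 0 ↔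
            lam = l₁ k ∨ lam = l₂ k ∨ lam = l₃ k ∨ lam = starRingEnd ℂ (l₃ k))) ∧
      Tendsto (fun k : ℕ => l₁ k / (2 * (k : ℂ) ^ 2)) atTop (nhds 1) ∧
      Tendsto (fun k : ℕ => l₂ k / (-(k : ℂ))) atTop (nhds 1) ∧
      Tendsto (fun k : ℕ => (l₃ k).re / (k : ℝ)) atTop (nhds 1) ∧
      Tendsto (fun k : ℕ => (l₃ k).im / (‖E‖ * Real.sqrt ((k : ℝ) / 2)))
        atTop (nhds 1) := by
  have hc : 0 < ‖E‖ ^ 2 := pow_pos (norm_pos_iff.2 hE) 2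
  obtain ⟨r, s, hroots⟩ := exists_zakharovRoots_seq hc hm
  obtain ⟨k₀, hk₀⟩ := eventually_atTop.1 hroots
  obtain ⟨hr_lim, hs_lim, hre_lim, hgap_lim⟩ := ZakharovRoots.tendsto hc hroots
  refine ⟨k₀, fun k => r k, fun k => s k,
    fun k => ⟨pairRe (m k) (r k) (s k), √(pairGap (k : ℝ) (m k) (r k) (s k))⟩,
    fun k hk => ?_, by simpa using hr_lim.ofReal, by simpa using hs_lim.ofReal, hre_lim, ?_⟩
  · have h := hk₀ k hk
    have hsqrt := Real.sqrt_pos.2 h.pairGap_pos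
    refine ⟨Complex.ofReal_im _, Complex.ofReal_im _, hsqrt.ne',
      pairwise_ne_ofReal_ofReal_conj h.s_lt_r.ne' hsqrt, fun lam => ?_⟩
    simpa only [zakharovQuartic, Complex.ofReal_pow, Complex.ofReal_natCast] using
      zakharovQuartic_ofReal_eq_zero_iff h.s_lt_r.ne' h.root_r h.root_s h.pairGap_pos.le lam
  · refine (Real.sqrt_one ▸ hgap_lim.sqrt).congr fun k => ?_
    rw [mul_div_assoc, Real.sqrt_div' _ (by positivity), Real.sqrt_mul (sq_nonneg _),
      Real.sqrt_sq (norm_nonneg _)]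
end

section
/- There exist C > 0 and k₀ ≥ 1 such that for all integers k ≥ k₀ and p ≥ 2, for any real m with k² + k − 1 < m ≤ k² + k and any sign ±, the solution e of the ODE i e' + (mp ± k²p²) e = f with e(0) = 0 and f ∈ C¹([0,t]) satisfies k²p² |e(t)| + |e'(t)| ≤ C ( ∫₀ᵗ |f| + ∫₀ᵗ |f'| + |f(0)| + |f(t)| ). -/
/-- uniform estimate for the Schrödinger modes `p ≥ 2`:
`k²p²|e(t)| + |e'(t)| ≤ C(∫|f| + ∫|f'| + |f(0)| + |f(t)|)`. -/
theorem stmt12 :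
    ∃ C > (0 : ℝ), ∃ k₀ : ℕ, 1 ≤ k₀ ∧
      ∀ k : ℕ, k₀ ≤ k → ∀ p : ℕ, 2 ≤ p → ∀ m : ℝ,
        (k : ℝ) ^ 2 + k - 1 < m → m ≤ (k : ℝ) ^ 2 + k →
        ∀ ε : ℝ, (ε = 1 ∨ ε = -1) →
        ∀ f e : ℝ → ℂ, ContDiff ℝ 1 f → Differentiable ℝ e → e 0 = 0 →
        (∀ s : ℝ, Complex.I * deriv e s +
            ((m * p + ε * (k : ℝ) ^ 2 * (p : ℝ) ^ 2 : ℝ) : ℂ) * e s = f s) →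
        ∀ t : ℝ, 0 ≤ t →
          (k : ℝ) ^ 2 * (p : ℝ) ^ 2 * ‖e t‖ + ‖deriv e t‖ ≤
            C * ((∫ s in (0 : ℝ)..t, ‖f s‖) + (∫ s in (0 : ℝ)..t, ‖deriv f s‖) +
              ‖f 0‖ + ‖f t‖) := by
  refine ⟨8, by norm_num, 2, by norm_num, ?_⟩
  intro k hk p hp m hm1 hm2 ε hε f e hf he he0 hode t ht
  set μ : ℝ := m * p + ε * (k : ℝ) ^ 2 * (p : ℝ) ^ 2 with hμdef
  have hk2 : (2 : ℝ) ≤ (k : ℝ) := by exact_mod_cast hk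
  have hp2 : (2 : ℝ) ≤ (p : ℝ) := by exact_mod_cast hp
  have hm0 : 0 < m := by nlinarith
  -- the frequency bound : k²p² ≤ 4|μ|
  have hμbound : (k : ℝ) ^ 2 * (p : ℝ) ^ 2 ≤ 4 * |μ| := by
    have hmp : m * (p:ℝ) ≤ ((k:ℝ)^2 + k) * p := by nlinarith
    have h1 : (0:ℝ) ≤ (k:ℝ)^2 * (p:ℝ) * ((p:ℝ) - 2) :=
      mul_nonneg (mul_nonneg (sq_nonneg _) (by linarith)) (by linarith)
    have h2 : (0:ℝ) ≤ (k:ℝ) * (p:ℝ) * ((k:ℝ) - 2) :=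
      mul_nonneg (mul_nonneg (by linarith) (by linarith)) (by linarith)
    rcases hε with h | h <;> subst h
    · rw [abs_of_pos (by nlinarith)]
      nlinarith
    · rw [abs_of_neg (by nlinarith)]
      nlinarith
  set c : ℂ := -(μ : ℂ) * Complex.I with hc
  have hnormE : ∀ s : ℝ, ‖Complex.exp (c * s)‖ = 1 := by
    intro s
    have : c * (s : ℂ) = ((-(μ * s) : ℝ) : ℂ) * Complex.I := by
      rw [hc]; push_cast; ring
    rw [this, Complex.norm_exp_ofReal_mul_I]
  -- derivative of e from the ODE
  have hde : ∀ s : ℝ, deriv e s =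
      Complex.I * (μ : ℂ) * e s - Complex.I * f s := by
    intro s
    have h := hode s
    have hI : Complex.I * Complex.I = -1 := Complex.I_mul_I
    linear_combination (-Complex.I) * h + (deriv e s) * hI
  -- auxiliary function w
  set w : ℝ → ℂ := fun s => ((μ : ℂ) * e s - f s) * Complex.exp (c * s) with hw
  have hdf : Continuous (deriv f) := hf.continuous_deriv le_rfl
  have hwderiv : ∀ s : ℝ, HasDerivAt w (-(deriv f s) * Complex.exp (c * s)) s := by
    intro s
    have hid : HasDerivAt (fun x : ℝ => (x : ℂ)) 1 s := by
      exact Complex.ofRealCLM.hasDerivAt (x := s)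
    have hE : HasDerivAt (fun x : ℝ => Complex.exp (c * x))
        (Complex.exp (c * s) * c) s := by
      have := (hid.const_mul c).cexp
      simpa using this
    have hfs : HasDerivAt f (deriv f s) s := (hf.differentiable one_ne_zero s).hasDerivAt
    have hes : HasDerivAt e (deriv e s) s := (he s).hasDerivAt
    have h1 : HasDerivAt (fun x => (μ : ℂ) * e x - f x)
        ((μ : ℂ) * deriv e s - deriv f s) s := (hes.const_mul _).sub hfs
    have h2 := h1.mul hE
    refine h2.congr_deriv ?_
    rw [hde s, hc]
    ring
  -- fundamental theorem of calculus
  have hcont : Continuous (fun s : ℝ => -(deriv f s) * Complex.exp (c * s)) :=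
    (hdf.neg).mul (Complex.continuous_exp.comp (continuous_const.mul Complex.continuous_ofReal))
  have hFTC : (∫ s in (0:ℝ)..t, -(deriv f s) * Complex.exp (c * s)) = w t - w 0 :=
    intervalIntegral.integral_eq_sub_of_hasDerivAt (fun s _ => hwderiv s)
      (hcont.intervalIntegrable 0 t)
  have hw0 : w 0 = -f 0 := by
    simp [hw, he0]
  -- bound on the integral
  have hIbound : ‖w t - w 0‖ ≤ ∫ s in (0:ℝ)..t, ‖deriv f s‖ := by
    rw [← hFTC]
    calc ‖∫ s in (0:ℝ)..t, -(deriv f s) * Complex.exp (c * s)‖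
        ≤ ∫ s in (0:ℝ)..t, ‖-(deriv f s) * Complex.exp (c * s)‖ :=
          intervalIntegral.norm_integral_le_integral_norm ht
      _ = ∫ s in (0:ℝ)..t, ‖deriv f s‖ := by
          congr 1; funext s
          rw [norm_mul, norm_neg, hnormE s, mul_one]
  have hwt : ‖w t‖ = ‖(μ : ℂ) * e t - f t‖ := by
    rw [hw]; rw [norm_mul, hnormE t, mul_one]
  -- main estimate on ‖μ e t‖
  have hnormμ : ‖(μ : ℂ) * e t‖ = |μ| * ‖e t‖ := by
    rw [norm_mul, Complex.norm_real, Real.norm_eq_abs]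
  have hmain : |μ| * ‖e t‖ ≤ ‖f 0‖ + (∫ s in (0:ℝ)..t, ‖deriv f s‖) + ‖f t‖ := by
    have h1 : ‖(μ : ℂ) * e t‖ ≤ ‖(μ : ℂ) * e t - f t‖ + ‖f t‖ := by
      calc ‖(μ : ℂ) * e t‖ = ‖((μ : ℂ) * e t - f t) + f t‖ := by ring_nf
        _ ≤ ‖(μ : ℂ) * e t - f t‖ + ‖f t‖ := norm_add_le _ _
    have h2 : ‖w t‖ ≤ ‖w 0‖ + ‖w t - w 0‖ := by
      calc ‖w t‖ = ‖w 0 + (w t - w 0)‖ := by ring_nf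
        _ ≤ ‖w 0‖ + ‖w t - w 0‖ := norm_add_le _ _
    have hw0n : ‖w 0‖ = ‖f 0‖ := by rw [hw0, norm_neg]
    rw [hw0n] at h2
    rw [← hnormμ]
    calc ‖(μ : ℂ) * e t‖ ≤ ‖(μ : ℂ) * e t - f t‖ + ‖f t‖ := h1
      _ = ‖w t‖ + ‖f t‖ := by rw [hwt]
      _ ≤ (‖f 0‖ + ‖w t - w 0‖) + ‖f t‖ := by linarith
      _ ≤ ‖f 0‖ + (∫ s in (0:ℝ)..t, ‖deriv f s‖) + ‖f t‖ := by linarith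
  -- estimate on ‖deriv e t‖
  have hderivbound : ‖deriv e t‖ ≤ |μ| * ‖e t‖ + ‖f t‖ := by
    rw [hde t]
    calc ‖Complex.I * (μ : ℂ) * e t - Complex.I * f t‖
        ≤ ‖Complex.I * (μ : ℂ) * e t‖ + ‖Complex.I * f t‖ := norm_sub_le _ _
      _ = |μ| * ‖e t‖ + ‖f t‖ := by
          rw [norm_mul, norm_mul, norm_mul, Complex.norm_I, one_mul, one_mul,
            Complex.norm_real, Real.norm_eq_abs]
  -- collect everything
  have hI1 : 0 ≤ ∫ s in (0:ℝ)..t, ‖f s‖ :=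
    intervalIntegral.integral_nonneg ht (fun s _ => norm_nonneg _)
  have hI2 : 0 ≤ ∫ s in (0:ℝ)..t, ‖deriv f s‖ :=
    intervalIntegral.integral_nonneg ht (fun s _ => norm_nonneg _)
  have he_nonneg : 0 ≤ ‖e t‖ := norm_nonneg _
  have hkp : (k : ℝ) ^ 2 * (p : ℝ) ^ 2 * ‖e t‖ ≤ 4 * (|μ| * ‖e t‖) := by
    nlinarith
  have hf0 : 0 ≤ ‖f 0‖ := norm_nonneg _
  have hft : 0 ≤ ‖f t‖ := norm_nonneg _
  nlinarith
end
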